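/- For real numbers a, b, c with b > 0 and a² + c² > 0 (more generally Re(b) > 0 and Re(a²+c²) > 0), the integral ∫₀^∞ erfc(a x + b/x) exp(−c² x²) x dx equals (1/2)(a²+c²)^{−1/2} (a + √(a²+c²))^{−1} exp(−2b(a + √(a²+c²))). -/

import Mathlib

open MeasureTheory Real

/-- The complementary error function `erfc z = (2/√π) ∫_z^∞ exp(−t²) dt`. -/
noncomputable def erfc (z : ℝ) : ℝ :=
  (2 / Real.sqrt π) * ∫ t in Set.Ioi z, Real.exp (-t ^ 2)

open Set Filter
lemma intOn_gauss (z : ℝ) : IntegrableOn (fun t : ℝ => Real.exp (-t ^ 2)) (Set.Ioi z) := by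
  have h := integrable_exp_neg_mul_sq (b := 1) one_pos
  simpa using h.integrableOn

lemma gauss_Ioi_zero : ∫ t in Set.Ioi (0:ℝ), Real.exp (-t ^ 2) = Real.sqrt π / 2 := by
  have := integral_gaussian_Ioi 1
  simpa using this

lemma sqrt_pi_pos : 0 < Real.sqrt π := Real.sqrt_pos.2 Real.pi_pos

lemma erfc_nonneg (z : ℝ) : 0 ≤ erfc z := by
  apply mul_nonneg (by positivity)
  exact setIntegral_nonneg measurableSet_Ioi fun t _ => (Real.exp_pos _).le

lemma erfc_zero : erfc 0 = 1 := by
  rw [erfc, gauss_Ioi_zero]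
  field_simp

lemma erfc_antitone : Antitone erfc := by
  intro z w h
  apply mul_le_mul_of_nonneg_left _ (by positivity)
  exact setIntegral_mono_set (intOn_gauss z) (Filter.Eventually.of_forall fun t => (Real.exp_pos _).le)
    (HasSubset.Subset.eventuallyLE (Set.Ioi_subset_Ioi h))

lemma erfc_le_two (z : ℝ) : erfc z ≤ 2 := by
  rcases le_or_gt 0 z with hz | hz
  · calc erfc z ≤ erfc 0 := erfc_antitone hz
    _ = 1 := erfc_zero
    _ ≤ 2 := one_le_two
  · rw [erfc]
    have h1 : (∫ t in Set.Ioi z, Real.exp (-t ^ 2)) ≤ ∫ t : ℝ, Real.exp (-t ^ 2) := by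
      apply setIntegral_le_integral
      · simpa using (integrable_exp_neg_mul_sq (b := 1) one_pos)
      · exact Filter.Eventually.of_forall fun t => (Real.exp_pos _).le
    have h2 : (∫ t : ℝ, Real.exp (-t ^ 2)) = Real.sqrt π := by
      have := integral_gaussian 1
      simpa using this
    calc (2 / Real.sqrt π) * ∫ t in Set.Ioi z, Real.exp (-t ^ 2)
        ≤ (2 / Real.sqrt π) * Real.sqrt π := by
          apply mul_le_mul_of_nonneg_left _ (by positivity)
          rw [← h2]; exact h1
      _ = 2 := by field_simp

lemma shift_Ioi (z : ℝ) (g : ℝ → ℝ) :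
    ∫ t in Set.Ioi z, g t = ∫ t in Set.Ioi (0:ℝ), g (t + z) := by
  have himg : (fun t : ℝ => t + z) '' Set.Ioi 0 = Set.Ioi z := by
    rw [Set.image_add_const_Ioi]; ring_nf
  rw [← himg,
    (measurePreserving_add_right volume z).setIntegral_image_emb
      (measurableEmbedding_addRight z) g (Set.Ioi 0)]

lemma erfc_le_exp {z : ℝ} (hz : 0 ≤ z) : erfc z ≤ Real.exp (-z ^ 2) := by
  have hshift : IntegrableOn (fun t : ℝ => Real.exp (-(t + z) ^ 2)) (Set.Ioi 0) := by
    have : Integrable (fun t : ℝ => Real.exp (-t ^ 2)) := by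
      simpa using integrable_exp_neg_mul_sq (b := 1) one_pos
    exact (this.comp_add_right z).integrableOn
  have key : (∫ t in Set.Ioi z, Real.exp (-t ^ 2))
      ≤ Real.exp (-z ^ 2) * ∫ t in Set.Ioi (0:ℝ), Real.exp (-t ^ 2) := by
    rw [shift_Ioi z (fun t => Real.exp (-t ^ 2)), ← integral_const_mul]
    apply setIntegral_mono_on hshift ((intOn_gauss 0).const_mul _) measurableSet_Ioi
    intro t ht
    rw [← Real.exp_add]
    apply Real.exp_le_exp.2
    nlinarith [Set.mem_Ioi.1 ht]
  calc erfc z ≤ (2 / Real.sqrt π) * (Real.exp (-z ^ 2) * ∫ t in Set.Ioi (0:ℝ), Real.exp (-t ^ 2)) :=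
        mul_le_mul_of_nonneg_left key (by positivity)
    _ = Real.exp (-z ^ 2) := by
        rw [show (∫ t in Set.Ioi (0:ℝ), Real.exp (-t ^ 2)) = Real.sqrt π / 2 by
          simpa using integral_gaussian_Ioi 1]
        have h : Real.sqrt π ≠ 0 := by positivity
        field_simp

lemma int_gauss : Integrable (fun t : ℝ => Real.exp (-t ^ 2)) := by
  simpa using integrable_exp_neg_mul_sq (b := 1) one_pos

lemma Ioi_split (z : ℝ) :
    (∫ t in Set.Ioi z, Real.exp (-t ^ 2))
      = (∫ t in Set.Ioi (0:ℝ), Real.exp (-t ^ 2)) - ∫ t in (0:ℝ)..z, Real.exp (-t ^ 2) := by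
  have h1 := intervalIntegral.integral_Iic_add_Ioi (μ := volume) (b := z) int_gauss.integrableOn int_gauss.integrableOn
  have h2 := intervalIntegral.integral_Iic_add_Ioi (μ := volume) (b := (0:ℝ)) int_gauss.integrableOn int_gauss.integrableOn
  have h3 := intervalIntegral.integral_Iic_sub_Iic (μ := volume) (f := fun t : ℝ => Real.exp (-t ^ 2))
    int_gauss.integrableOn int_gauss.integrableOn (a := (0:ℝ)) (b := z)
  linarith

lemma hasDerivAt_erfc (z : ℝ) :
    HasDerivAt erfc (-(2 / Real.sqrt π) * Real.exp (-z ^ 2)) z := by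
  have hprim : HasDerivAt (fun u => ∫ t in (0:ℝ)..u, Real.exp (-t ^ 2)) (Real.exp (-z ^ 2)) z :=
    intervalIntegral.integral_hasDerivAt_right int_gauss.intervalIntegrable
      int_gauss.aestronglyMeasurable.stronglyMeasurableAtFilter
      (Real.continuous_exp.comp (by continuity)).continuousAt
  have : HasDerivAt (fun u => (2 / Real.sqrt π) *
      ((∫ t in Set.Ioi (0:ℝ), Real.exp (-t ^ 2)) - ∫ t in (0:ℝ)..u, Real.exp (-t ^ 2)))
      (-(2 / Real.sqrt π) * Real.exp (-z ^ 2)) z := by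
    have h := (hasDerivAt_const (𝕜 := ℝ) z ((∫ t in Set.Ioi (0:ℝ), Real.exp (-t ^ 2)))).sub hprim
    have h2 := h.const_mul (2 / Real.sqrt π)
    refine h2.congr_deriv ?_
    ring
  apply this.congr_of_eventuallyEq
  filter_upwards with u
  rw [erfc, Ioi_split u]

lemma erfc_continuous : Continuous erfc :=
  continuous_iff_continuousAt.2 fun z => (hasDerivAt_erfc z).continuousAt

lemma exp_glasser_eq (p b x : ℝ) (hx : x ≠ 0) :
    Real.exp (-(p * x - b / x) ^ 2) = Real.exp (2 * p * b) * Real.exp (-(p ^ 2 * x ^ 2) - b ^ 2 / x ^ 2) := by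
  rw [← Real.exp_add]; congr 1; field_simp; ring

lemma glasser_contOn (p b : ℝ) :
    ContinuousOn (fun x : ℝ => Real.exp (-(p ^ 2 * x ^ 2) - b ^ 2 / x ^ 2)) (Set.Ioi 0) := by
  apply Real.continuous_exp.comp_continuousOn
  apply ContinuousOn.sub (by fun_prop)
  exact ContinuousOn.div continuousOn_const (by fun_prop) (fun x hx => by
    have := Set.mem_Ioi.1 hx; positivity)

lemma glasser_int {p b : ℝ} (hp : 0 < p) (hb : 0 < b) :
    IntegrableOn (fun x : ℝ => Real.exp (-(p ^ 2 * x ^ 2) - b ^ 2 / x ^ 2)) (Set.Ioi 0) := by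
  have h1 : IntegrableOn (fun x : ℝ => Real.exp (-(p^2) * x ^ 2)) (Set.Ioi 0) :=
    (integrable_exp_neg_mul_sq (by positivity)).integrableOn
  apply h1.mono' ((glasser_contOn p b).aestronglyMeasurable measurableSet_Ioi)
  filter_upwards [ae_restrict_mem measurableSet_Ioi] with x hx
  rw [Real.norm_eq_abs, abs_of_pos (Real.exp_pos _)]
  apply Real.exp_le_exp.2
  have hx0 : (0:ℝ) < x := hx
  have : 0 ≤ b ^ 2 / x ^ 2 := by positivity
  nlinarith

lemma glasser_sub {p b : ℝ} (hp : 0 < p) (hb : 0 < b) :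
    (fun x : ℝ => p * x - b / x) '' Set.Ioi 0 = Set.univ := by
  apply Set.eq_univ_of_forall
  intro y
  set s := Real.sqrt (y ^ 2 + 4 * p * b) with hs
  have hs2 : s ^ 2 = y ^ 2 + 4 * p * b := Real.sq_sqrt (by positivity)
  have habs : |y| < s := by
    rw [hs, ← Real.sqrt_sq_eq_abs]
    exact Real.sqrt_lt_sqrt (by positivity) (by nlinarith)
  have hx0 : 0 < (y + s) / (2 * p) := by
    have : -y ≤ |y| := neg_le_abs y
    apply div_pos (by linarith) (by positivity)
  refine ⟨(y + s) / (2 * p), hx0, ?_⟩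
  have hne : (y + s) / (2 * p) ≠ 0 := ne_of_gt hx0
  have hys : y + s ≠ 0 := by
    have := neg_le_abs y
    exact ne_of_gt (by linarith)
  field_simp
  nlinarith [hs2]

lemma glasser_A {p b : ℝ} (hp : 0 < p) (hb : 0 < b) :
    ∫ x in Set.Ioi (0:ℝ), (p + b / x ^ 2) * Real.exp (-(p ^ 2 * x ^ 2) - b ^ 2 / x ^ 2)
      = Real.sqrt π * Real.exp (-2 * p * b) := by
  have hf' : ∀ x ∈ Set.Ioi (0:ℝ), HasDerivWithinAt (fun x => p * x - b / x)
      (p + b / x ^ 2) (Set.Ioi 0) x := by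
    intro x hx
    have hx0 : (0:ℝ) < x := hx
    have h : HasDerivAt (fun x : ℝ => p * x - b / x)
        (p * 1 - (0 * x - b * 1) / x ^ 2) x :=
      (((hasDerivAt_id x).const_mul p)).sub
        ((hasDerivAt_const x b).div (hasDerivAt_id x) (ne_of_gt hx0))
    have h2 : p * 1 - (0 * x - b * 1) / x ^ 2 = p + b / x ^ 2 := by
      field_simp
      ring
    rw [h2] at h
    exact h.hasDerivWithinAt
  have hfinj : Set.InjOn (fun x : ℝ => p * x - b / x) (Set.Ioi 0) := by
    have hmono : StrictMonoOn (fun x : ℝ => p * x - b / x) (Set.Ioi 0) := by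
      intro x hx y hy hxy
      have hx0 : (0:ℝ) < x := hx
      have hy0 : (0:ℝ) < y := hy
      have h1 : b / y < b / x := div_lt_div_of_pos_left hb hx0 hxy
      have h2 : p * x < p * y := by nlinarith
      simp only []
      linarith
    exact hmono.injOn
  have key := integral_image_eq_integral_abs_deriv_smul measurableSet_Ioi hf' hfinj
    (fun u => Real.exp (-u ^ 2))
  rw [glasser_sub hp hb] at key
  have hgauss : ∫ u : ℝ, Real.exp (-u ^ 2) = Real.sqrt π := by
    simpa using integral_gaussian 1
  rw [Measure.restrict_univ, hgauss] at key
  have hcong : ∫ x in Set.Ioi (0:ℝ), |p + b / x ^ 2| • Real.exp (-(p * x - b / x) ^ 2)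
      = Real.exp (2 * p * b) * ∫ x in Set.Ioi (0:ℝ),
        (p + b / x ^ 2) * Real.exp (-(p ^ 2 * x ^ 2) - b ^ 2 / x ^ 2) := by
    rw [← integral_const_mul]
    apply setIntegral_congr_fun measurableSet_Ioi
    intro x hx
    have hx0 : (0:ℝ) < x := hx
    dsimp only
    rw [smul_eq_mul, abs_of_pos (by positivity : (0:ℝ) < p + b / x ^ 2),
      exp_glasser_eq p b x (ne_of_gt hx0)]
    ring
  rw [hcong] at key
  have hexp : Real.exp (-2 * p * b) = (Real.exp (2 * p * b))⁻¹ := by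
    rw [← Real.exp_neg]; ring_nf
  rw [hexp]
  rw [key, mul_comm (rexp (2 * p * b)), mul_assoc, mul_inv_cancel₀ (ne_of_gt (Real.exp_pos _)), mul_one]

lemma glasser {p b : ℝ} (hp : 0 < p) (hb : 0 < b) :
    ∫ x in Set.Ioi (0:ℝ), Real.exp (-(p ^ 2 * x ^ 2) - b ^ 2 / x ^ 2)
      = Real.sqrt π / (2 * p) * Real.exp (-2 * p * b) := by
  set e : ℝ → ℝ := fun x => Real.exp (-(p ^ 2 * x ^ 2) - b ^ 2 / x ^ 2) with he
  set I := ∫ x in Set.Ioi (0:ℝ), e x with hI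
  -- Step B : involution substitution shows ∫ (b/(p x²)) e x = I
  have hg' : ∀ x ∈ Set.Ioi (0:ℝ), HasDerivWithinAt (fun x => b / (p * x)) (-(b / (p * x ^ 2))) (Set.Ioi 0) x := by
    intro x hx
    have hx0 : (0:ℝ) < x := hx
    have h : HasDerivAt (fun x : ℝ => b / (p * x))
        ((0 * (p * x) - b * (p * 1)) / (p * x) ^ 2) x :=
      (hasDerivAt_const x b).div ((hasDerivAt_id x).const_mul p)
        (by positivity)
    have h2 : (0 * (p * x) - b * (p * 1)) / (p * x) ^ 2 = -(b / (p * x ^ 2)) := by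
      field_simp; ring
    rw [h2] at h
    exact h.hasDerivWithinAt
  have hgimg : (fun x : ℝ => b / (p * x)) '' Set.Ioi 0 = Set.Ioi 0 := by
    apply Set.Subset.antisymm
    · rintro y ⟨x, hx, rfl⟩
      have hx0 : (0:ℝ) < x := hx
      exact Set.mem_Ioi.2 (by positivity)
    · intro y hy
      have hy0 : (0:ℝ) < y := hy
      exact ⟨b / (p * y), Set.mem_Ioi.2 (by positivity), by field_simp⟩
  have hginj : Set.InjOn (fun x : ℝ => b / (p * x)) (Set.Ioi 0) := by
    intro x hx y hy hxy
    have hx0 : (0:ℝ) < x := hx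
    have hy0 : (0:ℝ) < y := hy
    field_simp at hxy
    exact hxy.symm
  have stepB : I = ∫ x in Set.Ioi (0:ℝ), (b / (p * x ^ 2)) * e x := by
    conv_lhs => rw [hI, ← hgimg]
    rw [integral_image_eq_integral_abs_deriv_smul measurableSet_Ioi hg' hginj e]
    apply setIntegral_congr_fun measurableSet_Ioi
    intro x hx
    have hx0 : (0:ℝ) < x := hx
    have hne : x ≠ 0 := ne_of_gt hx0
    simp only []
    rw [abs_neg, abs_of_pos (by positivity : (0:ℝ) < b / (p * x ^ 2))]
    have harg : e (b / (p * x)) = e x := by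
      rw [he]
      apply congrArg
      have hp0 : p ≠ 0 := ne_of_gt hp
      have hb0 : b ≠ 0 := ne_of_gt hb
      field_simp
      ring
    rw [smul_eq_mul, harg]
  -- integrability of the substituted integrand
  have hJint : IntegrableOn (fun x : ℝ => (b / (p * x ^ 2)) * e x) (Set.Ioi 0) := by
    have hiff := integrableOn_image_iff_integrableOn_abs_deriv_smul measurableSet_Ioi hg' hginj e
    rw [hgimg] at hiff
    have h1 := hiff.1 (glasser_int hp hb)
    apply h1.congr_fun _ measurableSet_Ioi
    intro x hx
    have hx0 : (0:ℝ) < x := hx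
    have hne : x ≠ 0 := ne_of_gt hx0
    dsimp only
    rw [abs_neg, abs_of_pos (by positivity : (0:ℝ) < b / (p * x ^ 2))]
    have harg : e (b / (p * x)) = e x := by
      rw [he]
      apply congrArg
      have hp0 : p ≠ 0 := ne_of_gt hp
      have hb0 : b ≠ 0 := ne_of_gt hb
      field_simp
      ring
    rw [smul_eq_mul, harg]
  -- combine with step A
  have hA := glasser_A hp hb
  have hsplit : ∫ x in Set.Ioi (0:ℝ), (p + b / x ^ 2) * e x
      = (∫ x in Set.Ioi (0:ℝ), p * e x) + ∫ x in Set.Ioi (0:ℝ), (b / (p * x ^ 2)) * e x * p := by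
    rw [← integral_add ((glasser_int hp hb).const_mul p) (hJint.mul_const p)]
    apply setIntegral_congr_fun measurableSet_Ioi
    intro x hx
    have hx0 : (0:ℝ) < x := hx
    have hne : x ≠ 0 := ne_of_gt hx0
    have hp0 : p ≠ 0 := ne_of_gt hp
    dsimp only
    rw [show p + b / x ^ 2 = p + b / (p * x ^ 2) * p by field_simp]
    ring
  have h2 : (∫ x in Set.Ioi (0:ℝ), (b / (p * x ^ 2)) * e x * p)
      = p * ∫ x in Set.Ioi (0:ℝ), (b / (p * x ^ 2)) * e x := by
    rw [mul_comm, ← integral_mul_const]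
  have h3 : (∫ x in Set.Ioi (0:ℝ), p * e x) = p * I := by
    rw [hI, ← integral_const_mul]
  rw [h2, ← stepB, h3] at hsplit
  rw [hsplit] at hA
  have hp0 : (0:ℝ) < 2 * p := by positivity
  rw [hI]
  field_simp at hA ⊢
  linarith

lemma erfc_tendsto_atTop : Tendsto erfc atTop (nhds 0) := by
  apply squeeze_zero' (Eventually.of_forall erfc_nonneg)
    (eventually_atTop.2 ⟨0, fun z hz => erfc_le_exp hz⟩)
  have h : Tendsto (fun z : ℝ => -z ^ 2) atTop atBot := by
    apply tendsto_neg_atBot_iff.2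
    exact tendsto_pow_atTop (by norm_num)
  exact Real.tendsto_exp_atBot.comp h

-- positivity of a when c = 0 in the main case
lemma a_pos_of_c_eq_zero {a c : ℝ} (hq : 0 < a + Real.sqrt (a ^ 2 + c ^ 2)) (hc : c = 0) :
    0 < a := by
  subst hc
  rw [show a ^ 2 + 0 ^ 2 = a ^ 2 by ring, Real.sqrt_sq_eq_abs] at hq
  rcases le_or_gt a 0 with h | h
  · rw [abs_of_nonpos h] at hq; linarith
  · exact h

lemma integrand_contOn (a b c : ℝ) :
    ContinuousOn (fun x : ℝ => erfc (a * x + b / x) * Real.exp (-(c ^ 2) * x ^ 2) * x)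
      (Set.Ioi 0) := by
  apply ContinuousOn.mul (ContinuousOn.mul _ (by fun_prop)) continuousOn_id
  apply erfc_continuous.comp_continuousOn
  exact ContinuousOn.add (by fun_prop)
    (ContinuousOn.div continuousOn_const continuousOn_id (fun x hx => ne_of_gt hx))

lemma main_int {a b c : ℝ} (hb : 0 < b) (hq : 0 < a + Real.sqrt (a ^ 2 + c ^ 2)) :
    IntegrableOn (fun x : ℝ => erfc (a * x + b / x) * Real.exp (-(c ^ 2) * x ^ 2) * x)
      (Set.Ioi 0) := by
  have hmeas : AEStronglyMeasurable (fun x : ℝ => erfc (a * x + b / x) * Real.exp (-(c ^ 2) * x ^ 2) * x) (volume.restrict (Set.Ioi 0)) := (integrand_contOn a b c).aestronglyMeasurable measurableSet_Ioi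
  rcases eq_or_ne c 0 with hc | hc
  · -- c = 0 : use erfc decay, a > 0
    have ha : 0 < a := a_pos_of_c_eq_zero hq hc
    have hdom : IntegrableOn (fun x : ℝ => x ^ (1:ℝ) * Real.exp (-(a ^ 2) * x ^ 2))
        (Set.Ioi 0) := integrableOn_rpow_mul_exp_neg_mul_sq (by positivity) (by norm_num)
    apply hdom.mono' hmeas
    filter_upwards [ae_restrict_mem measurableSet_Ioi] with x hx
    have hx0 : (0:ℝ) < x := hx
    have harg : 0 ≤ a * x + b / x := by positivity
    have h1 : erfc (a * x + b / x) ≤ Real.exp (-(a * x + b / x) ^ 2) := erfc_le_exp harg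
    have h2 : Real.exp (-(a * x + b / x) ^ 2) ≤ Real.exp (-(a ^ 2) * x ^ 2) := by
      apply Real.exp_le_exp.2
      have : (a * x + b / x) ^ 2 ≥ (a * x) ^ 2 := by nlinarith [sq_nonneg (b / x), mul_pos ha hx0, div_pos hb hx0]
      nlinarith
    rw [Real.norm_eq_abs, abs_of_nonneg (mul_nonneg (mul_nonneg (erfc_nonneg _) (Real.exp_pos _).le) hx0.le)]
    have hc2 : Real.exp (-(c ^ 2) * x ^ 2) = 1 := by rw [hc]; norm_num
    rw [hc2, Real.rpow_one]
    calc erfc (a * x + b / x) * 1 * x ≤ Real.exp (-(a ^ 2) * x ^ 2) * 1 * x := by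
          apply mul_le_mul_of_nonneg_right _ hx0.le
          rw [mul_one, mul_one]; exact h1.trans h2
      _ = x * Real.exp (-(a ^ 2) * x ^ 2) := by ring
  · -- c ≠ 0 : use erfc ≤ 2
    have hc2 : 0 < c ^ 2 := by positivity
    have hdom : IntegrableOn (fun x : ℝ => x ^ (1:ℝ) * Real.exp (-(c ^ 2) * x ^ 2))
        (Set.Ioi 0) := integrableOn_rpow_mul_exp_neg_mul_sq hc2 (by norm_num)
    apply (hdom.const_mul 2).mono' hmeas
    filter_upwards [ae_restrict_mem measurableSet_Ioi] with x hx
    have hx0 : (0:ℝ) < x := hx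
    rw [Real.norm_eq_abs, abs_of_nonneg (mul_nonneg (mul_nonneg (erfc_nonneg _) (Real.exp_pos _).le) hx0.le), Real.rpow_one]
    calc erfc (a * x + b / x) * Real.exp (-(c ^ 2) * x ^ 2) * x
        ≤ 2 * Real.exp (-(c ^ 2) * x ^ 2) * x := by
          apply mul_le_mul_of_nonneg_right _ hx0.le
          exact mul_le_mul_of_nonneg_right (erfc_le_two _) (Real.exp_pos _).le
      _ = 2 * (x * Real.exp (-(c ^ 2) * x ^ 2)) := by ring

lemma Fderiv_contOn (a b c : ℝ) :
    ContinuousOn (fun x : ℝ => -(2 / Real.sqrt π) * Real.exp (-(a * x + b / x) ^ 2) *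
      Real.exp (-(c ^ 2) * x ^ 2)) (Set.Ioi 0) := by
  apply ContinuousOn.mul (ContinuousOn.mul continuousOn_const _) (by fun_prop)
  apply Real.continuous_exp.comp_continuousOn
  apply ContinuousOn.neg
  apply ContinuousOn.pow
  exact ContinuousOn.add (by fun_prop)
    (ContinuousOn.div continuousOn_const continuousOn_id (fun x hx => ne_of_gt hx))

lemma F_hasDerivAt {a b c : ℝ} (hb : 0 < b) (habc : 0 < a ^ 2 + c ^ 2)
    (hq : 0 < a + Real.sqrt (a ^ 2 + c ^ 2)) :
    HasDerivAt (fun u : ℝ => ∫ x in Set.Ioi (0:ℝ),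
        erfc (a * x + u / x) * Real.exp (-(c ^ 2) * x ^ 2) * x)
      (-(Real.sqrt (a ^ 2 + c ^ 2))⁻¹ *
        Real.exp (-2 * b * (a + Real.sqrt (a ^ 2 + c ^ 2)))) b := by
  set p := Real.sqrt (a ^ 2 + c ^ 2) with hpdef
  have hp : 0 < p := Real.sqrt_pos.2 habc
  have hp2 : p ^ 2 = a ^ 2 + c ^ 2 := Real.sq_sqrt habc.le
  set F' : ℝ → ℝ → ℝ := fun u x =>
    -(2 / Real.sqrt π) * Real.exp (-(a * x + u / x) ^ 2) * Real.exp (-(c ^ 2) * x ^ 2) with hF'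
  have sqrtpi_pos : 0 < Real.sqrt π := Real.sqrt_pos.2 Real.pi_pos
  have key := hasDerivAt_integral_of_dominated_loc_of_deriv_le
    (μ := volume.restrict (Set.Ioi (0:ℝ))) (x₀ := b)
    (F := fun u x => erfc (a * x + u / x) * Real.exp (-(c ^ 2) * x ^ 2) * x)
    (F' := F')
    (bound := fun x => (2 / Real.sqrt π * Real.exp (3 * |a| * b)) *
      Real.exp (-(a ^ 2 + c ^ 2) * x ^ 2))
    (Metric.ball_mem_nhds b (half_pos hb))
    (Eventually.of_forall fun u =>
      (integrand_contOn a u c).aestronglyMeasurable measurableSet_Ioi)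
    (main_int hb hq)
    ((Fderiv_contOn a b c).aestronglyMeasurable measurableSet_Ioi)
    ?bound ?bint ?diff
  · obtain ⟨-, hd⟩ := key
    refine hd.congr_deriv ?_
    -- compute the integral of F'
    have hcong : ∫ x in Set.Ioi (0:ℝ), F' b x
        = ∫ x in Set.Ioi (0:ℝ), (-(2 / Real.sqrt π) * Real.exp (-2 * a * b)) *
            Real.exp (-(p ^ 2 * x ^ 2) - b ^ 2 / x ^ 2) := by
      apply setIntegral_congr_fun measurableSet_Ioi
      intro x hx
      have hx0 : (0:ℝ) < x := hx
      have hxne : x ≠ 0 := ne_of_gt hx0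
      rw [hF']
      dsimp only
      rw [mul_assoc, mul_assoc, ← Real.exp_add, ← Real.exp_add]
      congr 1
      rw [hp2]
      field_simp
      ring
    rw [hcong, integral_const_mul, glasser hp hb]
    have h1 : Real.sqrt π ≠ 0 := ne_of_gt sqrtpi_pos
    rw [show -2 * b * (a + p) = -2 * a * b + -2 * p * b by ring, Real.exp_add]
    field_simp
  case bound =>
    filter_upwards [ae_restrict_mem measurableSet_Ioi] with x hx
    intro u hu
    have hx0 : (0:ℝ) < x := hx
    have hxne : x ≠ 0 := ne_of_gt hx0
    rw [Metric.mem_ball, Real.dist_eq, abs_lt] at hu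
    have hu1 : b / 2 < u := by linarith
    have hu2 : u < 3 * b / 2 := by linarith
    have hu0 : 0 < u := lt_trans (half_pos hb) hu1
    rw [hF']
    dsimp only
    rw [Real.norm_eq_abs, abs_mul, abs_mul, abs_neg,
      abs_of_pos (by positivity : (0:ℝ) < 2 / Real.sqrt π),
      abs_of_pos (Real.exp_pos _), abs_of_pos (Real.exp_pos _)]
    rw [mul_assoc, mul_assoc, ← Real.exp_add, ← Real.exp_add]
    apply mul_le_mul_of_nonneg_left _ (by positivity)
    apply Real.exp_le_exp.2
    have hexp : (a * x + u / x) ^ 2 = a ^ 2 * x ^ 2 + 2 * a * u + u ^ 2 / x ^ 2 := by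
      field_simp
      ring
    have h3 : 0 ≤ u ^ 2 / x ^ 2 := by positivity
    have h4 : -(2 * a * u) ≤ 2 * |a| * u := by nlinarith [neg_abs_le a]
    have h5 : 2 * |a| * u ≤ 3 * |a| * b := by nlinarith [abs_nonneg a]
    nlinarith
  case bint =>
    exact ((integrable_exp_neg_mul_sq habc).integrableOn).const_mul _
  case diff =>
    filter_upwards [ae_restrict_mem measurableSet_Ioi] with x hx
    intro u hu
    have hx0 : (0:ℝ) < x := hx
    have hxne : x ≠ 0 := ne_of_gt hx0
    have h1' : HasDerivAt (fun u : ℝ => a * x + u / x) (1 / x) u :=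
      ((hasDerivAt_id u).div_const x).const_add (a * x)
    have h2 := (hasDerivAt_erfc (a * x + u / x)).comp u h1'
    have h3 := (h2.mul_const (Real.exp (-(c ^ 2) * x ^ 2))).mul_const x
    refine h3.congr_deriv ?_
    rw [hF']
    dsimp only
    field_simp

lemma F_tendsto {a c : ℝ} (hq : 0 < a + Real.sqrt (a ^ 2 + c ^ 2)) :
    Tendsto (fun u : ℝ => ∫ x in Set.Ioi (0:ℝ),
        erfc (a * x + u / x) * Real.exp (-(c ^ 2) * x ^ 2) * x) atTop (nhds 0) := by
  have key := tendsto_integral_filter_of_dominated_convergence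
    (μ := volume.restrict (Set.Ioi (0:ℝ))) (l := atTop) (f := fun _ : ℝ => (0:ℝ))
    (F := fun u x => erfc (a * x + u / x) * Real.exp (-(c ^ 2) * x ^ 2) * x)
    (fun x => erfc (a * x + 1 / x) * Real.exp (-(c ^ 2) * x ^ 2) * x)
    ?meas ?bd ?bint ?lim
  · simpa using key
  case meas => exact Eventually.of_forall fun u =>
      (integrand_contOn a u c).aestronglyMeasurable measurableSet_Ioi
  case bd =>
    filter_upwards [eventually_ge_atTop (1:ℝ)] with u hu
    filter_upwards [ae_restrict_mem measurableSet_Ioi] with x hx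
    have hx0 : (0:ℝ) < x := hx
    rw [Real.norm_eq_abs, abs_of_nonneg
      (mul_nonneg (mul_nonneg (erfc_nonneg _) (Real.exp_pos _).le) hx0.le)]
    have harg : a * x + 1 / x ≤ a * x + u / x := by
      have h : 1 / x ≤ u / x := by gcongr
      linarith
    have herfc : erfc (a * x + u / x) ≤ erfc (a * x + 1 / x) := erfc_antitone harg
    exact mul_le_mul_of_nonneg_right
      (mul_le_mul_of_nonneg_right herfc (Real.exp_pos _).le) hx0.le
  case bint => exact main_int one_pos hq
  case lim =>
    filter_upwards [ae_restrict_mem measurableSet_Ioi] with x hx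
    have hx0 : (0:ℝ) < x := hx
    have h1 : Tendsto (fun u : ℝ => a * x + u / x) atTop atTop := by
      apply tendsto_atTop_add_const_left
      exact Tendsto.atTop_div_const hx0 tendsto_id
    have h2 : Tendsto (fun u : ℝ => erfc (a * x + u / x)) atTop (nhds 0) :=
      erfc_tendsto_atTop.comp h1
    have h3 := (h2.mul_const (Real.exp (-(c ^ 2) * x ^ 2))).mul_const x
    simpa using h3

/-- For real `a, b, c` with `b > 0` and `a² + c² > 0`,
`∫₀^∞ erfc(a x + b/x) exp(−c² x²) x dx
  = (1/2)(a²+c²)^{−1/2} (a + √(a²+c²))^{−1} exp(−2b(a + √(a²+c²)))`. -/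
theorem erfc_integral_eq (a b c : ℝ) (hb : 0 < b) (habc : 0 < a ^ 2 + c ^ 2) :
    ∫ x in Set.Ioi (0 : ℝ), erfc (a * x + b / x) * Real.exp (-(c ^ 2) * x ^ 2) * x =
      (1 / 2) * (a ^ 2 + c ^ 2) ^ (-(1 / 2 : ℝ)) *
        (a + Real.sqrt (a ^ 2 + c ^ 2))⁻¹ *
        Real.exp (-2 * b * (a + Real.sqrt (a ^ 2 + c ^ 2))) := by
  set p := Real.sqrt (a ^ 2 + c ^ 2) with hpdef
  have hp : 0 < p := Real.sqrt_pos.2 habc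
  have hp2 : p ^ 2 = a ^ 2 + c ^ 2 := Real.sq_sqrt habc.le
  have hrpow : (a ^ 2 + c ^ 2) ^ (-(1 / 2 : ℝ)) = p⁻¹ := by
    rw [Real.rpow_neg habc.le, hpdef, Real.sqrt_eq_rpow]
  rcases lt_or_ge 0 (a + p) with hq | hq
  · -- main case
    set q := a + p with hqdef
    set F : ℝ → ℝ := fun u => ∫ x in Set.Ioi (0:ℝ),
      erfc (a * x + u / x) * Real.exp (-(c ^ 2) * x ^ 2) * x with hF
    set G : ℝ → ℝ := fun u => 1 / (2 * p * q) * Real.exp (-2 * u * q) with hG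
    have hGderiv : ∀ u : ℝ, HasDerivAt G (-p⁻¹ * Real.exp (-2 * u * q)) u := by
      intro u
      have h1 : HasDerivAt (fun u : ℝ => -2 * u * q) (-2 * q) u := by
        have h := (hasDerivAt_id u).const_mul (-2 * q)
        have heq : (fun u : ℝ => -2 * q * id u) = fun u : ℝ => -2 * u * q := by
          funext y; simp; ring
        rw [heq] at h
        simpa using h
      have h2 := h1.exp
      have h3 := h2.const_mul (1 / (2 * p * q))
      refine h3.congr_deriv ?_
      field_simp
    have hkey : ∀ B, b ≤ B → F B - F b = G B - G b := by
      intro B hB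
      have hIcc : ∀ u ∈ Set.uIcc b B, 0 < u := by
        intro u hu
        rw [Set.uIcc_of_le hB] at hu
        exact lt_of_lt_of_le hb hu.1
      have hcont : Continuous (fun u : ℝ => -p⁻¹ * Real.exp (-2 * u * q)) := by fun_prop
      have h1 : ∫ u in b..B, -p⁻¹ * Real.exp (-2 * u * q) = F B - F b := by
        exact intervalIntegral.integral_eq_sub_of_hasDerivAt
          (fun u hu => F_hasDerivAt (hIcc u hu) habc hq)
          (hcont.intervalIntegrable b B)
      have h2 : ∫ u in b..B, -p⁻¹ * Real.exp (-2 * u * q) = G B - G b :=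
        intervalIntegral.integral_eq_sub_of_hasDerivAt (fun u _ => hGderiv u)
          (hcont.intervalIntegrable b B)
      linarith
    have hGlim : Tendsto G atTop (nhds 0) := by
      rw [hG]
      have h1 : Tendsto (fun u : ℝ => -2 * u * q) atTop atBot := by
        have : (fun u : ℝ => -2 * u * q) = fun u : ℝ => u * (-2 * q) := by
          funext u; ring
        rw [this]
        exact tendsto_id.atTop_mul_const_of_neg (by nlinarith)
      have h2 := Real.tendsto_exp_atBot.comp h1
      have h3 := h2.const_mul (1 / (2 * p * q))
      simpa using h3
    have hFG : Tendsto (fun B => F B - G B) atTop (nhds (0 - 0)) :=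
      (F_tendsto hq).sub hGlim
    rw [show (0:ℝ) - 0 = 0 by ring] at hFG
    have hconst : (fun B => F B - G B) =ᶠ[atTop] fun _ => F b - G b := by
      filter_upwards [eventually_ge_atTop b] with B hB
      have := hkey B hB
      linarith
    have hFb : F b - G b = 0 :=
      tendsto_nhds_unique tendsto_const_nhds (hFG.congr' hconst)
    have hfinal : F b = 1 / (2 * p * q) * Real.exp (-2 * b * q) := by
      have h := hFb
      simp only [hG] at h
      linarith
    rw [hrpow]
    refine hfinal.trans ?_
    have hq0 : q ≠ 0 := ne_of_gt hq
    have hp0 : p ≠ 0 := ne_of_gt hp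
    field_simp
  · -- degenerate case : a + p = 0, c = 0, a < 0
    have hap : 0 ≤ a + p := by
      have h1 : |a| ≤ p := by
        rw [hpdef, ← Real.sqrt_sq_eq_abs]
        exact Real.sqrt_le_sqrt (by nlinarith)
      linarith [neg_le_abs a]
    have hap0 : a + p = 0 := le_antisymm hq hap
    have hpa : p = -a := by linarith
    have hc : c = 0 := by
      have : a ^ 2 = a ^ 2 + c ^ 2 := by rw [← hp2, hpa]; ring
      nlinarith [sq_nonneg c]
    have ha : a < 0 := by nlinarith
    rw [hap0, inv_zero, mul_zero, zero_mul]
    -- show the integral is zero because the integrand is not integrable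
    apply integral_undef
    intro hint
    set x₀ := Real.sqrt (b / (-a)) with hx₀
    have hapos : (0:ℝ) < -a := by linarith
    have hx₀pos : 0 < x₀ := Real.sqrt_pos.2 (div_pos hb hapos)
    have h2 : IntegrableOn (fun x : ℝ => erfc (a * x + b / x) * Real.exp (-(c ^ 2) * x ^ 2) * x)
        (Set.Ioi x₀) :=
      IntegrableOn.mono_set hint (Set.Ioi_subset_Ioi hx₀pos.le)
    have h3 : IntegrableOn (fun x : ℝ => x) (Set.Ioi x₀) := by
      apply h2.mono' measurable_id.aestronglyMeasurable
      filter_upwards [ae_restrict_mem measurableSet_Ioi] with x hx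
      have hxx : x₀ < x := hx
      have hx0 : 0 < x := lt_trans hx₀pos hxx
      simp only [id_eq, Real.norm_eq_abs]
      rw [abs_of_pos hx0]
      have hexp1 : Real.exp (-(c ^ 2) * x ^ 2) = 1 := by
        rw [hc]; norm_num
      have hs2 : x₀ ^ 2 = b / (-a) := Real.sq_sqrt (div_pos hb hapos).le
      have hsq : b / (-a) < x ^ 2 := by nlinarith
      have hb2 : b < (-a) * x ^ 2 := by
        rw [div_lt_iff₀ hapos] at hsq; linarith
      have hnum : a * x ^ 2 + b ≤ 0 := by linarith
      have harg : a * x + b / x ≤ 0 := by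
        have heq : a * x + b / x = (a * x ^ 2 + b) / x := by field_simp
        rw [heq]
        exact div_nonpos_of_nonpos_of_nonneg hnum hx0.le
      have herfc : 1 ≤ erfc (a * x + b / x) := by
        rw [← erfc_zero]
        exact erfc_antitone harg
      calc x = 1 * 1 * x := by ring
        _ ≤ erfc (a * x + b / x) * Real.exp (-(c ^ 2) * x ^ 2) * x := by
            rw [hexp1]
            apply mul_le_mul_of_nonneg_right _ hx0.le
            nlinarith
    have h4 : IntegrableOn (fun x : ℝ => x ^ (1:ℝ)) (Set.Ioi x₀) := by
      apply h3.congr_fun _ measurableSet_Ioi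
      intro x _
      exact (Real.rpow_one x).symm
    rw [integrableOn_Ioi_rpow_iff hx₀pos] at h4
    norm_num at h4
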